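/- Let Y = {y₁,…,y_k} ⊂ ℝ^{k+1} be a similarity embedding with k distinct points. Then there exist constants C > 0 and δ > 0, depending only on Y, with the following property: for every similarity embedding Y' = {y₁',…,y_{k+2}'} ⊂ ℝ^{k+1} with k+2 distinct points and all indices α, β ∈ {1,…,k}, if h := √( ∥y₁'−y₁∥² + ⋯ + ∥y_k'−y_k∥² + ∥y_{k+1}'−y_α∥² + ∥y_{k+2}'−y_β∥² ) < δ, then |ρ_{Y'} − ρ_Y| ≤ C·h. -/

import Mathlib

/-!
Let `c, c'` be the circumcenters of `Y, Y'`, and write `c' = o + z` with `o` in the affine span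
of `Y` and `z` orthogonal to it. Since `|ρ' - ρ| ≤ ‖c' - c‖ + h`, it suffices to show that
`‖o - c‖` and `‖z‖` are `O(h)`. The point `o` is equidistant from the points of `Y` up to `O(h)`,
and a vector in the direction of `Y` is controlled by its inner products with the chords of `Y`;
this bounds `‖o - c‖`.

For `z`: tri-similarity puts the projection of every point of `Y'` on the line of a short chord
`q - p` of `Y'` (with `p, q` both near some `y_γ`) inside the segment `[p, q]`, and `p, q` lie on
the sphere about `c'`. Hence short chords are almost orthogonal both to the direction of `Y`
and to `z`. In `ℝ^{k+1}` these span a hyperplane, so if `‖z‖ ≫ h` all short chords are almost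
parallel to one line. If `α = β` this contradicts the acute angles of the tri-similar triangle
formed by the three points of `Y'` near `y_α`; if `α ≠ β`, tri-similarity keeps the angle
between the short chords near `y_α` and near `y_β` away from `0` and `π`.
-/

open Metric

noncomputable section

def TriSim {E : Type*} [NormedAddCommGroup E] [InnerProductSpace ℝ E] (a b c : E) : Prop :=
  ‖a - c‖ ^ 2 + (1 / 2) * (‖a - b‖ ^ 2 * ‖b - c‖ ^ 2) ≤ ‖a - b‖ ^ 2 + ‖b - c‖ ^ 2

def IsCircum {E : Type*} [NormedAddCommGroup E] [InnerProductSpace ℝ E]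
    (Y : Set E) (c : E) (ρ : ℝ) : Prop :=
  c ∈ affineSpan ℝ Y ∧ ∀ y ∈ Y, dist c y = ρ

open Classical in
/-- Junk value `(0, 0)` when `Y` has no circumsphere. -/
noncomputable def circumData {E : Type*} [NormedAddCommGroup E] [InnerProductSpace ℝ E]
    (Y : Set E) : E × ℝ :=
  if h : ∃ p : E × ℝ, IsCircum Y p.1 p.2 ∧ 0 ≤ p.2 then h.choose else (0, 0)

noncomputable def circumradius {E : Type*} [NormedAddCommGroup E] [InnerProductSpace ℝ E]
    (Y : Set E) : ℝ := (circumData Y).2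

def IsSimEmb {E : Type*} [NormedAddCommGroup E] [InnerProductSpace ℝ E] (Y : Set E) : Prop :=
  Y.Finite ∧ AffineIndependent ℝ ((↑) : Y → E) ∧
    (∀ y ∈ Y, ∀ y' ∈ Y, ‖y - y'‖ ^ 2 < 2) ∧
    circumradius Y < 1 ∧
    ∀ a ∈ Y, ∀ b ∈ Y, ∀ c ∈ Y, TriSim a b c

open scoped RealInnerProductSpace
open Module (finrank)

section TriSim

variable {E : Type*} [NormedAddCommGroup E] [InnerProductSpace ℝ E]

def TriSimOn (S : Set E) : Prop :=
  ∀ a ∈ S, ∀ b ∈ S, ∀ c ∈ S, TriSim a b c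

theorem triSim_iff_inner {a b c : E} :
    TriSim a b c ↔ ‖a - b‖ ^ 2 * ‖c - b‖ ^ 2 / 4 ≤ ⟪a - b, c - b⟫ := by
  have h : ‖a - c‖ ^ 2 = ‖a - b‖ ^ 2 - 2 * ⟪a - b, c - b⟫ + ‖c - b‖ ^ 2 := by
    rw [← norm_sub_sq_real]; congr 2; abel
  rw [TriSim, h, norm_sub_rev b c]
  constructor <;> intro <;> linarith

theorem TriSim.inner_pos {a b c : E} (h : TriSim a b c) (hab : a ≠ b) (hcb : c ≠ b) :
    0 < ⟪a - b, c - b⟫ :=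
  lt_of_lt_of_le (by have := sub_ne_zero.2 hab; have := sub_ne_zero.2 hcb; positivity)
    (triSim_iff_inner.1 h)

theorem TriSim.inner_le {f p q : E} (h : TriSim f q p) :
    ⟪f - p, q - p⟫ ≤ ‖q - p‖ ^ 2 - ‖f - q‖ ^ 2 * ‖q - p‖ ^ 2 / 4 := by
  have h' := triSim_iff_inner.1 h
  have e : ⟪f - q, p - q⟫ = ‖q - p‖ ^ 2 - ⟪f - p, q - p⟫ := by
    rw [← real_inner_self_eq_norm_sq, ← inner_sub_left, ← neg_sub q p, inner_neg_right,
      ← inner_neg_left]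
    congr 1; abel
  rw [e, norm_sub_rev p q] at h'
  linarith

variable {S : Set E}

theorem TriSimOn.inner_mem_Icc (hS : TriSimOn S) {f p q : E} (hf : f ∈ S) (hp : p ∈ S)
    (hq : q ∈ S) : 0 ≤ ⟪f - p, q - p⟫ ∧ ⟪f - p, q - p⟫ ≤ ‖q - p‖ ^ 2 := by
  have lo := triSim_iff_inner.1 (hS f hf p hp q hq)
  have hi := (hS f hf q hq p hp).inner_le
  constructor
  · exact le_trans (by positivity) lo
  · nlinarith [sq_nonneg ‖f - q‖, sq_nonneg ‖q - p‖]

/-- Both `⟪g - a, b - a⟫` and `⟪a' - a, b - a⟫` lie in `[m²/4, 1 - m²/4] · ‖b - a‖²`. -/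
theorem TriSimOn.abs_inner_le {a b a' g : E} (hS : TriSimOn S) (ha : a ∈ S) (hb : b ∈ S)
    (ha' : a' ∈ S) (hg : g ∈ S) {m : ℝ} (hm : 0 ≤ m) (haa' : m ≤ ‖a - a'‖) (hag : m ≤ ‖a - g‖)
    (hba' : m ≤ ‖b - a'‖) (hbg : m ≤ ‖b - g‖) :
    |⟪b - a, g - a'⟫| ≤ (1 - m ^ 2 / 2) * ‖b - a‖ ^ 2 := by
  have e : ⟪b - a, g - a'⟫ = ⟪g - a, b - a⟫ - ⟪a' - a, b - a⟫ := by
    rw [← inner_sub_left, real_inner_comm]; congr 1; abel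
  have sq : ∀ {x y : E}, m ≤ ‖x - y‖ → m ^ 2 * ‖b - a‖ ^ 2 ≤ ‖y - x‖ ^ 2 * ‖b - a‖ ^ 2 :=
    fun {x y} h => by rw [norm_sub_rev y x]; gcongr
  have g1 := triSim_iff_inner.1 (hS g hg a ha b hb)
  have g2 := (hS g hg b hb a ha).inner_le
  have a1 := triSim_iff_inner.1 (hS a' ha' a ha b hb)
  have a2 := (hS a' ha' b hb a ha).inner_le
  rw [e, abs_le]
  constructor <;> nlinarith [sq haa', sq hag, sq hba', sq hbg]

end TriSim

section AlmostAlong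

variable {E : Type*} [NormedAddCommGroup E] [InnerProductSpace ℝ E] {e u v : E} {ε : ℝ}

/-- `u` makes an angle of sine at most `ε` with the line `ℝ e` (for a unit vector `e`). -/
def AlmostAlong (e : E) (ε : ℝ) (u : E) : Prop :=
  ‖u - ⟪e, u⟫ • e‖ ≤ ε * ‖u‖

theorem AlmostAlong.neg (h : AlmostAlong e ε u) : AlmostAlong e ε (-u) := by
  rw [AlmostAlong, inner_neg_right, neg_smul, ← neg_sub', norm_neg, norm_neg]
  exact h

theorem inner_eq_mul_add_inner_of_norm_eq_one (he : ‖e‖ = 1) (u v : E) :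
    ⟪u, v⟫ = ⟪e, u⟫ * ⟪e, v⟫ + ⟪u - ⟪e, u⟫ • e, v - ⟪e, v⟫ • e⟫ := by
  simp only [inner_sub_left, inner_sub_right, real_inner_smul_left, real_inner_smul_right,
    real_inner_self_eq_norm_sq, he, real_inner_comm u e]
  ring

theorem AlmostAlong.abs_inner_sub_le (he : ‖e‖ = 1) (hu : AlmostAlong e ε u)
    (hv : AlmostAlong e ε v) : |⟪u, v⟫ - ⟪e, u⟫ * ⟪e, v⟫| ≤ ε ^ 2 * (‖u‖ * ‖v‖) := by
  rw [inner_eq_mul_add_inner_of_norm_eq_one he, add_sub_cancel_left]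
  calc _ ≤ ‖u - ⟪e, u⟫ • e‖ * ‖v - ⟪e, v⟫ • e‖ := abs_real_inner_le_norm _ _
    _ ≤ (ε * ‖u‖) * (ε * ‖v‖) := mul_le_mul hu hv (norm_nonneg _) ((norm_nonneg _).trans hu)
    _ = ε ^ 2 * (‖u‖ * ‖v‖) := by ring

theorem AlmostAlong.abs_mul_ge (he : ‖e‖ = 1) (hε : ε ^ 2 ≤ 1) (hu : AlmostAlong e ε u)
    (hv : AlmostAlong e ε v) : (1 - ε ^ 2) * (‖u‖ * ‖v‖) ≤ |⟪e, u⟫ * ⟪e, v⟫| := by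
  have sq : ∀ {w}, AlmostAlong e ε w → (1 - ε ^ 2) * ‖w‖ ^ 2 ≤ ⟪e, w⟫ ^ 2 := fun {w} hw => by
    have := abs_le.1 (hw.abs_inner_sub_le he hw)
    rw [real_inner_self_eq_norm_sq] at this
    nlinarith
  have h1 := sq hu
  have h2 := sq hv
  refine (le_abs_self _).trans (sq_le_sq.1 ?_)
  calc ((1 - ε ^ 2) * (‖u‖ * ‖v‖)) ^ 2 = ((1 - ε ^ 2) * ‖u‖ ^ 2) * ((1 - ε ^ 2) * ‖v‖ ^ 2) := by
        ring
    _ ≤ ⟪e, u⟫ ^ 2 * ⟪e, v⟫ ^ 2 := mul_le_mul h1 h2 (by nlinarith) (sq_nonneg _)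
    _ = (⟪e, u⟫ * ⟪e, v⟫) ^ 2 := by ring

theorem AlmostAlong.mul_le_abs_inner (he : ‖e‖ = 1) (hε : ε ^ 2 ≤ 1) (hu : AlmostAlong e ε u)
    (hv : AlmostAlong e ε v) : (1 - 2 * ε ^ 2) * (‖u‖ * ‖v‖) ≤ |⟪u, v⟫| := by
  have h1 := hu.abs_mul_ge he hε hv
  have h2 := hu.abs_inner_sub_le he hv
  have := abs_sub_abs_le_abs_sub (⟪e, u⟫ * ⟪e, v⟫) ⟪u, v⟫
  rw [abs_sub_comm] at this
  linarith

theorem AlmostAlong.mul_pos_of_inner_pos (he : ‖e‖ = 1) (hε : 2 * ε ^ 2 ≤ 1)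
    (hu : AlmostAlong e ε u) (hv : AlmostAlong e ε v) (h : 0 < ⟪u, v⟫) :
    0 < ⟪e, u⟫ * ⟪e, v⟫ := by
  have h1 := hu.abs_mul_ge he (by linarith) hv
  have h2 := (abs_le.1 (hu.abs_inner_sub_le he hv)).2
  by_contra! hneg
  rw [abs_of_nonpos hneg] at h1
  nlinarith [mul_nonneg (norm_nonneg u) (norm_nonneg v)]

end AlmostAlong

section Obstructions

variable {E : Type*} [NormedAddCommGroup E] [InnerProductSpace ℝ E] {S : Set E} {e : E} {ε : ℝ}

/-- The three angles of a tri-similar triangle are acute, which is impossible if all its sides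
are almost parallel. -/
theorem TriSimOn.false_of_almostAlong_triangle (hS : TriSimOn S) {a b g : E} (ha : a ∈ S)
    (hb : b ∈ S) (hg : g ∈ S) (hab : a ≠ b) (hag : a ≠ g) (hbg : b ≠ g) (he : ‖e‖ = 1)
    (hε : 2 * ε ^ 2 ≤ 1) (h₁ : AlmostAlong e ε (b - a)) (h₂ : AlmostAlong e ε (g - a))
    (h₃ : AlmostAlong e ε (g - b)) : False := by
  have s₁ := h₁.mul_pos_of_inner_pos he hε h₂ ((hS b hb a ha g hg).inner_pos hab.symm hag.symm)
  have s₂ := h₁.neg.mul_pos_of_inner_pos he hε h₃ <| by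
    rw [neg_sub]; exact (hS a ha b hb g hg).inner_pos hab hbg.symm
  have s₃ := h₂.neg.mul_pos_of_inner_pos he hε h₃.neg <| by
    rw [neg_sub, neg_sub]; exact (hS a ha g hg b hb).inner_pos hag hbg
  simp only [inner_neg_right] at s₂ s₃
  nlinarith [mul_pos (mul_pos s₁ s₂) s₃, sq_nonneg (⟪e, b - a⟫ * ⟪e, g - a⟫ * ⟪e, g - b⟫)]

/-- Tri-similarity bounds the cosine of the angle between `b - a` and `g - a'` by `1 - m² / 2`,
while almost parallel vectors have cosine at least `1 - 2ε²`. -/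
theorem TriSimOn.false_of_almostAlong_of_le_norm_sub (hS : TriSimOn S) {a b a' g : E}
    (ha : a ∈ S) (hb : b ∈ S) (ha' : a' ∈ S) (hg : g ∈ S) (hab : a ≠ b) (ha'g : a' ≠ g)
    {m : ℝ} (hm : 0 ≤ m) (haa' : m ≤ ‖a - a'‖) (hag : m ≤ ‖a - g‖) (hba' : m ≤ ‖b - a'‖)
    (hbg : m ≤ ‖b - g‖) (he : ‖e‖ = 1) (hε : ε ^ 2 ≤ 1) (hεm : 4 * ε ^ 2 < m ^ 2)
    (h₁ : AlmostAlong e ε (b - a)) (h₂ : AlmostAlong e ε (g - a')) : False := by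
  have lo := h₁.mul_le_abs_inner he hε h₂
  have up₁ := hS.abs_inner_le ha hb ha' hg hm haa' hag hba' hbg
  have up₂ := hS.abs_inner_le ha' hg ha hb hm (by rwa [norm_sub_rev]) (by rwa [norm_sub_rev])
    (by rwa [norm_sub_rev]) (by rwa [norm_sub_rev])
  rw [real_inner_comm] at up₂
  have hA : 0 < ‖b - a‖ := norm_pos_iff.2 (sub_ne_zero.2 hab.symm)
  have hB : 0 < ‖g - a'‖ := norm_pos_iff.2 (sub_ne_zero.2 ha'g.symm)
  have hc : 0 ≤ 1 - m ^ 2 / 2 := by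
    by_contra! h
    linarith [abs_nonneg ⟪b - a, g - a'⟫, mul_neg_of_neg_of_pos h (pow_pos hA 2)]
  have l₁ : (1 - 2 * ε ^ 2) * ‖g - a'‖ ≤ (1 - m ^ 2 / 2) * ‖b - a‖ := by nlinarith
  have l₂ : (1 - 2 * ε ^ 2) * ‖b - a‖ ≤ (1 - m ^ 2 / 2) * ‖g - a'‖ := by nlinarith
  nlinarith [mul_le_mul l₁ l₂ (by nlinarith) (by positivity), mul_pos hA hB]

end Obstructions

section Projection

variable {E : Type*} [NormedAddCommGroup E] [InnerProductSpace ℝ E]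

theorem Submodule.IsOrtho.starProjection_sup_apply {V W : Submodule ℝ E}
    [V.HasOrthogonalProjection] [W.HasOrthogonalProjection] [(V ⊔ W).HasOrthogonalProjection]
    (h : V ⟂ W) (u : E) :
    (V ⊔ W).starProjection u = V.starProjection u + W.starProjection u := by
  refine Submodule.eq_starProjection_of_mem_of_inner_eq_zero
    (add_mem (Submodule.mem_sup_left (V.starProjection_apply_mem u))
      (Submodule.mem_sup_right (W.starProjection_apply_mem u))) fun x hx => ?_
  obtain ⟨a, ha, b, hb, rfl⟩ := Submodule.mem_sup.1 hx
  have h₁ := V.starProjection_inner_eq_zero u a ha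
  have h₂ := W.starProjection_inner_eq_zero u b hb
  have h₃ := h.symm.inner_eq (W.starProjection_apply_mem u) ha
  have h₄ := h.inner_eq (V.starProjection_apply_mem u) hb
  simp only [inner_add_left, inner_add_right, inner_sub_left] at *
  linarith

theorem Submodule.exists_norm_eq_one_eq_span_singleton [FiniteDimensional ℝ E]
    {W : Submodule ℝ E} (hW : finrank ℝ W = 1) : ∃ e : E, ‖e‖ = 1 ∧ W = ℝ ∙ e := by
  obtain ⟨v, hvW, hv⟩ := Submodule.exists_mem_ne_zero_of_ne_bot
    (Submodule.one_le_finrank_iff.1 hW.ge)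
  have he : ‖‖v‖⁻¹ • v‖ = 1 := norm_smul_inv_norm hv
  refine ⟨‖v‖⁻¹ • v, he, (Submodule.eq_of_le_of_finrank_eq ?_ ?_).symm⟩
  · exact (Submodule.span_singleton_le_iff_mem _ _).2 (W.smul_mem _ hvW)
  · rw [finrank_span_singleton (norm_ne_zero_iff.1 (he.trans_ne one_ne_zero)), hW]

/-- In codimension two, the complement of `V ⊕ ℝ z` is a line `ℝ e`, and a vector `u` differs
from its component along `e` by its projections onto `V` and onto `ℝ z`. -/
theorem exists_norm_eq_one_forall_norm_sub_le [FiniteDimensional ℝ E] {V : Submodule ℝ E}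
    {z : E} (hz : z ∈ Vᗮ) (hz0 : z ≠ 0) (hV : finrank ℝ V + 2 = finrank ℝ E) :
    ∃ e : E, ‖e‖ = 1 ∧ ∀ u, ‖u - ⟪e, u⟫ • e‖ ≤ ‖V.starProjection u‖ + |⟪z, u⟫| / ‖z‖ := by
  set U := V ⊔ ℝ ∙ z
  have hzV : z ∉ V := fun h => hz0 <| by
    simpa [V.inf_orthogonal_eq_bot] using (Submodule.mem_inf.2 ⟨h, hz⟩ : z ∈ V ⊓ Vᗮ)
  have hU : finrank ℝ Uᗮ = 1 := by
    have := U.finrank_add_finrank_orthogonal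
    rw [Submodule.finrank_sup_span_singleton hzV] at this
    omega
  obtain ⟨e, he, hUe⟩ := Submodule.exists_norm_eq_one_eq_span_singleton hU
  refine ⟨e, he, fun u => ?_⟩
  have hVz : V ⟂ ℝ ∙ z :=
    (Submodule.isOrtho_iff_le.2 ((Submodule.span_singleton_le_iff_mem _ _).2 hz)).symm
  have key : u - ⟪e, u⟫ • e = V.starProjection u + (ℝ ∙ z).starProjection u := by
    have hUe' : Uᗮ.starProjection u = ⟪e, u⟫ • e := by
      simp_rw [hUe, Submodule.starProjection_unit_singleton ℝ he]
    rw [← hVz.starProjection_sup_apply, ← hUe', eq_comm, eq_sub_iff_add_eq]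
    exact U.starProjection_add_starProjection_orthogonal u
  have hz' : 0 < ‖z‖ := norm_pos_iff.2 hz0
  have hPz : ‖(ℝ ∙ z).starProjection u‖ = |⟪z, u⟫| / ‖z‖ := by
    rw [Submodule.starProjection_singleton, norm_smul, norm_div, Real.norm_eq_abs]
    simp only [Real.ringHom_apply, norm_pow, norm_norm]
    field_simp
  rw [key, ← hPz]
  exact norm_add_le _ _

end Projection

theorem exists_pos_le_norm_sub_of_injective {E ι : Type*} [NormedAddCommGroup E] [Finite ι]
    {y : ι → E} (hy : Function.Injective y) :
    ∃ D, 0 < D ∧ D ≤ 1 ∧ ∀ i j, i ≠ j → D ≤ ‖y i - y j‖ := by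
  classical
  cases isEmpty_or_nonempty ι
  · exact ⟨1, one_pos, le_rfl, fun i => isEmptyElim i⟩
  let f : ι × ι → ℝ := fun p => if p.1 = p.2 then 1 else ‖y p.1 - y p.2‖
  obtain ⟨p₀, hp₀⟩ := Finite.exists_min f
  have hf : 0 < f p₀ := by
    simp only [f]
    split_ifs with h
    exacts [one_pos, norm_pos_iff.2 (sub_ne_zero.2 (hy.ne h))]
  refine ⟨min (f p₀) 1, lt_min hf one_pos, min_le_right _ _, fun i j hij => ?_⟩
  exact (min_le_left _ _).trans ((hp₀ (i, j)).trans (by simp [f, hij]))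

section Chords

variable {E : Type*} [NormedAddCommGroup E] [InnerProductSpace ℝ E] {ι : Type*}

def ChordBound (y : ι → E) (K : ℝ) : Prop :=
  ∀ v ∈ vectorSpan ℝ (Set.range y), ∀ B, 0 ≤ B → (∀ i j, |⟪y i - y j, v⟫| ≤ B) → ‖v‖ ≤ K * B

theorem exists_chordBound [Fintype ι] (y : ι → E) : ∃ K, 0 ≤ K ∧ ChordBound y K := by
  set V := vectorSpan ℝ (Set.range y)
  let T : V →ₗ[ℝ] ι × ι → ℝ := LinearMap.pi fun p => (innerₛₗ ℝ (y p.1 - y p.2)).comp V.subtype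
  have hT : LinearMap.ker T = ⊥ := by
    refine LinearMap.ker_eq_bot'.2 fun v hv => Subtype.ext <| inner_self_eq_zero (𝕜 := ℝ) |>.1 ?_
    have hV : V ≤ (ℝ ∙ (v : E))ᗮ := Submodule.span_le.2 <| by
      rintro _ ⟨_, ⟨i, rfl⟩, _, ⟨j, rfl⟩, rfl⟩
      exact Submodule.mem_orthogonal_singleton_iff_inner_left.2 (congrFun hv (i, j))
    exact Submodule.mem_orthogonal_singleton_iff_inner_right.1 (hV v.2)
  obtain ⟨K, -, hK⟩ := T.exists_antilipschitzWith hT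
  refine ⟨K, K.2, fun v hv B hB hvB => ?_⟩
  have hTv : ‖T ⟨v, hv⟩‖ ≤ B := (pi_norm_le_iff_of_nonneg hB).2 fun p => hvB p.1 p.2
  calc ‖v‖ = dist (⟨v, hv⟩ : V) 0 := by simp
    _ ≤ K * dist (T ⟨v, hv⟩) (T 0) := hK.le_mul_dist _ _
    _ ≤ K * B := by rw [map_zero, dist_zero_right]; gcongr

end Chords

theorem abs_norm_sub_sq_sub_sq_le {E : Type*} [NormedAddCommGroup E] {c x w : E} {ρ h : ℝ}
    (hx : ‖c - x‖ = ρ) (hxw : ‖x - w‖ ≤ h) (hρ : ρ ≤ 1) (hh : h ≤ 1) :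
    |‖c - w‖ ^ 2 - ρ ^ 2| ≤ 3 * h := by
  have hdiff : |‖c - w‖ - ρ| ≤ h := by
    rw [← hx]
    refine (abs_norm_sub_norm_le _ _).trans (le_of_eq_of_le ?_ hxw)
    congr 1; abel
  have hρ0 : 0 ≤ ρ := hx ▸ norm_nonneg _
  rw [abs_le] at hdiff ⊢
  constructor <;> nlinarith [norm_nonneg (c - w)]

section Sphere

variable {E : Type*} [NormedAddCommGroup E] [InnerProductSpace ℝ E]

theorem inner_sub_eq_of_norm_sub_eq {c p q : E} (h : ‖c - p‖ = ‖c - q‖) :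
    ⟪c - p, q - p⟫ = ‖q - p‖ ^ 2 / 2 := by
  have e : ‖c - q‖ ^ 2 = ‖c - p‖ ^ 2 - 2 * ⟪c - p, q - p⟫ + ‖q - p‖ ^ 2 := by
    rw [← norm_sub_sq_real]; congr 2; abel
  rw [h] at e
  linarith

theorem norm_sub_sq_eq_of_mem_orthogonal {V : Submodule ℝ E} {c o w : E} (hw : o - w ∈ V)
    (hc : c - o ∈ Vᗮ) : ‖c - w‖ ^ 2 = ‖c - o‖ ^ 2 + ‖o - w‖ ^ 2 := by
  rw [← sub_add_sub_cancel c o w, norm_add_sq_real,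
    Submodule.inner_left_of_mem_orthogonal hw hc]
  ring

end Sphere

section Perturbation

variable {E : Type*} [NormedAddCommGroup E] [InnerProductSpace ℝ E] {ι : Type*} {y x : ι → E}
  {S : Set E} {c' o p q : E} {h K : ℝ}

theorem TriSimOn.abs_inner_chord_le (hS : TriSimOn S) (hxS : ∀ i, x i ∈ S)
    (hxy : ∀ i, ‖x i - y i‖ ≤ h) (hp : p ∈ S) (hq : q ∈ S) (hpq : ‖q - p‖ ≤ 2 * h) (i j : ι) :
    |⟪y i - y j, q - p⟫| ≤ 4 * h * ‖q - p‖ := by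
  have e : ⟪y i - y j, q - p⟫ =
      ⟪y i - x i, q - p⟫ + (⟪x i - p, q - p⟫ - ⟪x j - p, q - p⟫) + ⟪x j - y j, q - p⟫ := by
    simp only [← inner_sub_left, ← inner_add_left]; congr 1; abel
  have hi := hS.inner_mem_Icc (hxS i) hp hq
  have hj := hS.inner_mem_Icc (hxS j) hp hq
  have ci := abs_le.1 <| (abs_real_inner_le_norm (y i - x i) (q - p)).trans <|
    mul_le_mul_of_nonneg_right ((norm_sub_rev _ _).trans_le (hxy i)) (norm_nonneg _)
  have cj := abs_le.1 <| (abs_real_inner_le_norm (x j - y j) (q - p)).trans <|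
    mul_le_mul_of_nonneg_right (hxy j) (norm_nonneg _)
  have hsq : ‖q - p‖ ^ 2 ≤ 2 * h * ‖q - p‖ := by nlinarith [norm_nonneg (q - p)]
  rw [e, abs_le]
  constructor <;> linarith [hi.1, hi.2, hj.1, hj.2]

theorem ChordBound.norm_starProjection_le [Finite ι] (hK : ChordBound y K) {u : E} {B : ℝ}
    (hB : 0 ≤ B) (hu : ∀ i j, |⟪y i - y j, u⟫| ≤ B) :
    ‖(vectorSpan ℝ (Set.range y)).starProjection u‖ ≤ K * B := by
  refine hK _ (Submodule.starProjection_apply_mem _ _) B hB fun i j => ?_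
  have hij : y i - y j ∈ vectorSpan ℝ (Set.range y) :=
    vsub_mem_vectorSpan ℝ (Set.mem_range_self i) (Set.mem_range_self j)
  rw [← Submodule.inner_starProjection_left_eq_right, Submodule.starProjection_eq_self_iff.2 hij]
  exact hu i j

theorem abs_inner_chord_le {V : Submodule ℝ E} [V.HasOrthogonalProjection] {w : E} {R : ℝ}
    (hw : o - w ∈ V) (hwo : ‖o - w‖ ≤ R) (hpw : ‖p - w‖ ≤ h) (hpq : ‖q - p‖ ≤ 2 * h)
    (hc' : ‖c' - p‖ = ‖c' - q‖) :
    |⟪c' - o, q - p⟫| ≤ 2 * h * ‖q - p‖ + R * ‖V.starProjection (q - p)‖ := by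
  have e : ⟪c' - o, q - p⟫ =
      ⟪c' - p, q - p⟫ + ⟪p - w, q - p⟫ - ⟪o - w, V.starProjection (q - p)⟫ := by
    rw [← Submodule.inner_starProjection_left_eq_right, Submodule.starProjection_eq_self_iff.2 hw,
      ← inner_add_left, ← inner_sub_left]
    congr 1; abel
  have h₁ := inner_sub_eq_of_norm_sub_eq hc'
  have h₂ := abs_le.1 <| (abs_real_inner_le_norm (p - w) (q - p)).trans <|
    mul_le_mul_of_nonneg_right hpw (norm_nonneg _)
  have h₃ := abs_le.1 <| (abs_real_inner_le_norm (o - w) (V.starProjection (q - p))).trans <|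
    mul_le_mul_of_nonneg_right hwo (norm_nonneg _)
  have hsq : ‖q - p‖ ^ 2 ≤ 2 * h * ‖q - p‖ := by nlinarith [norm_nonneg (q - p)]
  rw [e, abs_le]
  constructor <;> nlinarith

end Perturbation

section Offset

variable {E : Type*} [NormedAddCommGroup E] [InnerProductSpace ℝ E] {ι : Type*} {y x : ι → E}
  {S : Set E} {c' o : E} {h K D ε ρ' : ℝ}

theorem almostAlong_of_le_norm_offset [Finite ι] (hK : ChordBound y K) (hK0 : 0 ≤ K)
    (hS : TriSimOn S) (hxS : ∀ i, x i ∈ S) (hxy : ∀ i, ‖x i - y i‖ ≤ h)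
    (hc' : ∀ s ∈ S, ‖c' - s‖ = ρ') (hρ' : ρ' ≤ 1) (hh : h ≤ 1)
    (ho : ∀ i, o - y i ∈ vectorSpan ℝ (Set.range y)) (hz : c' - o ∈ (vectorSpan ℝ (Set.range y))ᗮ)
    {e : E} (hline : ∀ u, ‖u - ⟪e, u⟫ • e‖ ≤
      ‖(vectorSpan ℝ (Set.range y)).starProjection u‖ + |⟪c' - o, u⟫| / ‖c' - o‖)
    (hKh : 4 * K * h ≤ ε / 2) (hoff : 2 * (1 + 4 * K) * h ≤ ε / 2 * ‖c' - o‖)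
    {p q : E} (hp : p ∈ S) (hq : q ∈ S) {γ : ι} (hpy : ‖p - y γ‖ ≤ h) (hqy : ‖q - y γ‖ ≤ h) :
    AlmostAlong e ε (q - p) := by
  have hh0 : 0 ≤ h := (norm_nonneg _).trans hpy
  have hpq : ‖q - p‖ ≤ 2 * h := by
    have := norm_sub_le_norm_sub_add_norm_sub q (y γ) p
    rw [norm_sub_rev (y γ)] at this
    linarith
  have hP := hK.norm_starProjection_le (by positivity) (hS.abs_inner_chord_le hxS hxy hp hq hpq)
  have hoy : ‖o - y γ‖ ≤ 2 := by
    have h₁ := norm_sub_sq_eq_of_mem_orthogonal (ho γ) hz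
    have h₂ := norm_sub_le_norm_sub_add_norm_sub c' p (y γ)
    rw [hc' p hp] at h₂
    nlinarith [norm_nonneg (o - y γ), norm_nonneg (c' - o), norm_nonneg (c' - y γ)]
  have hzu := abs_inner_chord_le (ho γ) hoy hpy hpq ((hc' p hp).trans (hc' q hq).symm)
  have hε : 0 ≤ ε / 2 := le_trans (by positivity) hKh
  have hz' : |⟪c' - o, q - p⟫| / ‖c' - o‖ ≤ ε / 2 * ‖q - p‖ := by
    refine div_le_of_le_mul₀ (norm_nonneg _) (by positivity) ?_
    nlinarith [norm_nonneg (q - p), mul_le_mul_of_nonneg_right hoff (norm_nonneg (q - p))]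
  calc ‖(q - p) - ⟪e, q - p⟫ • e‖ ≤ ε / 2 * ‖q - p‖ + ε / 2 * ‖q - p‖ := by
        refine (hline _).trans (add_le_add (hP.trans ?_) hz')
        nlinarith [norm_nonneg (q - p), mul_le_mul_of_nonneg_right hKh (norm_nonneg (q - p))]
    _ = ε * ‖q - p‖ := by ring

theorem norm_offset_le [FiniteDimensional ℝ E] [Finite ι]
    (hV : finrank ℝ (vectorSpan ℝ (Set.range y)) + 2 = finrank ℝ E)
    (hK : ChordBound y K) (hK0 : 0 ≤ K) (hD0 : 0 < D) (hD1 : D ≤ 1)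
    (hD : ∀ i j, i ≠ j → D ≤ ‖y i - y j‖) (hS : TriSimOn S) (hxS : ∀ i, x i ∈ S)
    (hxy : ∀ i, ‖x i - y i‖ ≤ h) (hc' : ∀ s ∈ S, ‖c' - s‖ = ρ') (hρ' : ρ' ≤ 1)
    (ho : ∀ i, o - y i ∈ vectorSpan ℝ (Set.range y)) (hz : c' - o ∈ (vectorSpan ℝ (Set.range y))ᗮ)
    {a b : E} (ha : a ∈ S) (hb : b ∈ S) {α β : ι} (hay : ‖a - y α‖ ≤ h) (hby : ‖b - y β‖ ≤ h)
    (hxa : x α ≠ a) (hxb : x β ≠ b) (hab : a ≠ b) (hh : h ≤ D / (64 * (K + 1))) :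
    ‖c' - o‖ ≤ 32 * (1 + 4 * K) / D * h := by
  have hh0 : 0 ≤ h := (norm_nonneg _).trans hay
  rw [le_div_iff₀ (by positivity)] at hh
  have hKh : 4 * K * h ≤ D / 8 / 2 := by nlinarith
  by_contra! hlt
  have hoff : 2 * (1 + 4 * K) * h ≤ D / 8 / 2 * ‖c' - o‖ := by
    rw [div_mul_eq_mul_div, div_lt_iff₀ hD0] at hlt
    nlinarith
  have hz0 : c' - o ≠ 0 := norm_pos_iff.1 (lt_of_le_of_lt (by positivity) hlt)
  obtain ⟨e, he, hline⟩ := exists_norm_eq_one_forall_norm_sub_le hz hz0 hV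
  have halign : ∀ {p q γ}, p ∈ S → q ∈ S → ‖p - y γ‖ ≤ h → ‖q - y γ‖ ≤ h →
      AlmostAlong e (D / 8) (q - p) := fun hp hq hpy hqy =>
    almostAlong_of_le_norm_offset hK hK0 hS hxS hxy hc' hρ' (by nlinarith) ho hz hline hKh hoff
      hp hq hpy hqy
  rcases eq_or_ne α β with rfl | hαβ
  · exact hS.false_of_almostAlong_triangle (hxS α) ha hb hxa hxb hab he (by nlinarith)
      (halign (hxS α) ha (hxy α) hay) (halign (hxS α) hb (hxy α) hby) (halign ha hb hay hby)
  · have far : ∀ {p q}, ‖p - y α‖ ≤ h → ‖q - y β‖ ≤ h → D / 2 ≤ ‖p - q‖ := fun {p q} hp hq => by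
      have h₁ := norm_sub_le_norm_sub_add_norm_sub (y α) p (y β)
      have h₂ := norm_sub_le_norm_sub_add_norm_sub p q (y β)
      rw [norm_sub_rev (y α) p] at h₁
      nlinarith [hD α β hαβ]
    exact hS.false_of_almostAlong_of_le_norm_sub (hxS α) ha (hxS β) hb hxa hxb (m := D / 2)
      (by positivity) (far (hxy α) (hxy β)) (far (hxy α) hby) (far hay (hxy β)) (far hay hby) he
      (by nlinarith) (by nlinarith) (halign (hxS α) ha (hxy α) hay) (halign (hxS β) hb (hxy β) hby)

end Offset

section Radius

variable {E : Type*} [NormedAddCommGroup E] [InnerProductSpace ℝ E] {ι : Type*} {y x : ι → E}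
  {S : Set E} {c c' o : E} {h K D ρ ρ' : ℝ}

theorem ChordBound.norm_sub_le_of_almost_equidistant (hK : ChordBound y K) {R η : ℝ}
    (hc : ∀ i, ‖c - y i‖ = ρ) (hoc : o - c ∈ vectorSpan ℝ (Set.range y)) (hη : 0 ≤ η)
    (ho : ∀ i, |‖o - y i‖ ^ 2 - R| ≤ η) : ‖o - c‖ ≤ K * η := by
  have e : ∀ i, ‖o - y i‖ ^ 2 = ‖o - c‖ ^ 2 + 2 * ⟪o - c, c - y i⟫ + ρ ^ 2 := fun i => by
    rw [← hc i, ← norm_add_sq_real, sub_add_sub_cancel]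
  refine hK _ hoc η hη fun i j => ?_
  have hij : ⟪y i - y j, o - c⟫ = ⟪o - c, c - y j⟫ - ⟪o - c, c - y i⟫ := by
    rw [real_inner_comm, ← inner_sub_right]; congr 1; abel
  have hi := abs_le.1 (ho i)
  have hj := abs_le.1 (ho j)
  rw [hij, abs_le]
  constructor <;> linarith [e i, e j]

theorem TriSimOn.abs_sub_radius_le [FiniteDimensional ℝ E] [Finite ι]
    (hV : finrank ℝ (vectorSpan ℝ (Set.range y)) + 2 = finrank ℝ E)
    (hK : ChordBound y K) (hK0 : 0 ≤ K) (hD0 : 0 < D) (hD1 : D ≤ 1)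
    (hD : ∀ i j, i ≠ j → D ≤ ‖y i - y j‖) (hS : TriSimOn S) (hxS : ∀ i, x i ∈ S)
    (hxy : ∀ i, ‖x i - y i‖ ≤ h) (hc' : ∀ s ∈ S, dist c' s = ρ') (hρ' : ρ' ≤ 1)
    (hc : c ∈ affineSpan ℝ (Set.range y)) (hcy : ∀ y' ∈ Set.range y, dist c y' = ρ)
    {a b : E} (ha : a ∈ S) (hb : b ∈ S) {α β : ι} (hay : ‖a - y α‖ ≤ h) (hby : ‖b - y β‖ ≤ h)
    (hxa : x α ≠ a) (hxb : x β ≠ b) (hab : a ≠ b) (hh : h ≤ D / (64 * (K + 1))) :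
    |ρ' - ρ| ≤ (32 * (1 + 4 * K) / D + 3 * K + 1) * h := by
  simp only [dist_eq_norm, Set.forall_mem_range] at hc' hcy
  set V := vectorSpan ℝ (Set.range y)
  set o := c + V.starProjection (c' - c)
  have hh0 : 0 ≤ h := (norm_nonneg _).trans hay
  have hh1 : h ≤ 1 := by
    rw [le_div_iff₀ (by positivity)] at hh
    nlinarith
  have ho : ∀ i, o - y i ∈ V := fun i => by
    have hci : c - y i ∈ V := by
      simpa [V, direction_affineSpan] using
        AffineSubspace.vsub_mem_direction hc (mem_affineSpan ℝ (Set.mem_range_self i))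
    simpa [o, add_sub_right_comm] using add_mem hci (V.starProjection_apply_mem (c' - c))
  have hz : c' - o ∈ Vᗮ := by
    simpa [o, sub_sub] using V.sub_starProjection_mem_orthogonal (c' - c)
  have hoff := norm_offset_le hV hK hK0 hD0 hD1 hD hS hxS hxy hc' hρ' ho hz ha hb hay hby hxa hxb
    hab hh
  have hoc : ‖o - c‖ ≤ K * (3 * h) := by
    have hoc : o - c ∈ V := by
      rw [add_sub_cancel_left]; exact V.starProjection_apply_mem (c' - c)
    refine hK.norm_sub_le_of_almost_equidistant (R := ρ' ^ 2 - ‖c' - o‖ ^ 2) hcy hoc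
      (by positivity) fun i => ?_
    have := abs_norm_sub_sq_sub_sq_le (hc' _ (hxS i)) (hxy i) hρ' hh1
    rw [norm_sub_sq_eq_of_mem_orthogonal (ho i) hz] at this
    convert this using 2; ring
  have hρ : |ρ' - ρ| ≤ ‖c' - c‖ + h := by
    rw [← hc' _ (hxS α), ← hcy α]
    refine (abs_norm_sub_norm_le _ _).trans ?_
    rw [sub_sub_sub_comm]
    exact (norm_sub_le _ _).trans (add_le_add_right (hxy α) _)
  calc |ρ' - ρ| ≤ ‖c' - o‖ + ‖o - c‖ + h := hρ.trans (by
        gcongr; exact norm_sub_le_norm_sub_add_norm_sub c' o c)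
    _ ≤ 32 * (1 + 4 * K) / D * h + K * (3 * h) + h := by gcongr
    _ = (32 * (1 + 4 * K) / D + 3 * K + 1) * h := by ring

end Radius

theorem isCircum_circumData {E ι : Type*} [NormedAddCommGroup E] [InnerProductSpace ℝ E]
    [Nonempty ι] [Finite ι] {p : ι → E} (hp : AffineIndependent ℝ p) :
    IsCircum (Set.range p) (circumData (Set.range p)).1 (circumradius (Set.range p)) := by
  obtain ⟨s, ⟨hs, hps⟩, -⟩ := hp.existsUnique_dist_eq
  have hsph : IsCircum (Set.range p) s.center s.radius :=
    ⟨hs, fun x hx => by rw [dist_comm]; exact hps hx⟩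
  have hex : ∃ q : E × ℝ, IsCircum (Set.range p) q.1 q.2 ∧ 0 ≤ q.2 := by
    obtain ⟨i⟩ := ‹Nonempty ι›
    exact ⟨(s.center, s.radius), hsph, hsph.2 _ (Set.mem_range_self i) ▸ dist_nonneg⟩
  rw [circumradius, circumData, dif_pos hex]
  exact hex.choose_spec.1

/-- For a similarity embedding `Y = {y₁,…,y_k} ⊂ ℝ^{k+1}` with `k` distinct points, there
are constants `C, δ > 0` depending only on `Y` such that for every similarity embedding
`Y' = {y₁',…,y_{k+2}'} ⊂ ℝ^{k+1}` with `k+2` distinct points and all `α, β ∈ {1,…,k}`,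
if `h = √(Σᵢ ‖yᵢ'−yᵢ‖² + ‖y_{k+1}'−y_α‖² + ‖y_{k+2}'−y_β‖²) < δ` then
`|ρ_{Y'} − ρ_Y| ≤ C·h`. -/
theorem circumradius_lipschitz_of_simEmb
    (k : ℕ) (y : Fin k → EuclideanSpace ℝ (Fin (k + 1)))
    (hinj : Function.Injective y) (hY : IsSimEmb (Set.range y)) :
    ∃ C > (0 : ℝ), ∃ δ > (0 : ℝ),
      ∀ y' : Fin (k + 2) → EuclideanSpace ℝ (Fin (k + 1)),
        Function.Injective y' → IsSimEmb (Set.range y') →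
        ∀ α β : Fin k,
          Real.sqrt ((∑ i : Fin k, ‖y' (Fin.castAdd 2 i) - y i‖ ^ 2)
              + ‖y' ⟨k, by omega⟩ - y α‖ ^ 2 + ‖y' ⟨k + 1, by omega⟩ - y β‖ ^ 2) < δ →
          |circumradius (Set.range y') - circumradius (Set.range y)|
            ≤ C * Real.sqrt ((∑ i : Fin k, ‖y' (Fin.castAdd 2 i) - y i‖ ^ 2)
              + ‖y' ⟨k, by omega⟩ - y α‖ ^ 2 + ‖y' ⟨k + 1, by omega⟩ - y β‖ ^ 2) := by
  obtain ⟨-, hYind, -, -, -⟩ := hY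
  obtain ⟨K, hK0, hK⟩ := exists_chordBound y
  obtain ⟨D, hD0, hD1, hD⟩ := exists_pos_le_norm_sub_of_injective hinj
  refine ⟨32 * (1 + 4 * K) / D + 3 * K + 1, by positivity, D / (64 * (K + 1)), by positivity,
    fun y' hinj' ⟨_, hY'ind, _, hρ', hS⟩ α β hh => ?_⟩
  have : Nonempty (Fin k) := ⟨α⟩
  have hyind := hYind.of_set_of_injective hinj
  have hc := isCircum_circumData hyind
  have hc' := isCircum_circumData (hY'ind.of_set_of_injective hinj')
  have hV : finrank ℝ (vectorSpan ℝ (Set.range y)) + 2 =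
      finrank ℝ (EuclideanSpace ℝ (Fin (k + 1))) := by
    have := hyind.finrank_vectorSpan_add_one
    rw [Fintype.card_fin] at this
    rw [finrank_euclideanSpace, Fintype.card_fin]
    omega
  have hsum : 0 ≤ ∑ i : Fin k, ‖y' (Fin.castAdd 2 i) - y i‖ ^ 2 := by positivity
  have hle : ∀ {v : EuclideanSpace ℝ (Fin (k + 1))} {t : ℝ}, 0 ≤ t → ‖v‖ ^ 2 ≤ t → ‖v‖ ≤ √t :=
    fun ht hv => (Real.le_sqrt (norm_nonneg _) ht).2 hv
  refine TriSimOn.abs_sub_radius_le (x := fun i => y' (Fin.castAdd 2 i)) (α := α) (β := β) hV hK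
    hK0 hD0 hD1 hD hS (fun i => Set.mem_range_self _) (fun i => hle (by positivity) ?_) hc'.2
    hρ'.le hc.1 hc.2 (Set.mem_range_self ⟨k, by omega⟩) (Set.mem_range_self ⟨k + 1, by omega⟩)
    (hle (by positivity) ?_) (hle (by positivity) ?_) (hinj'.ne ?_) (hinj'.ne ?_) (hinj'.ne ?_)
    hh.le
  · have := Finset.single_le_sum (f := fun j => ‖y' (Fin.castAdd 2 j) - y j‖ ^ 2)
      (fun j _ => sq_nonneg _) (Finset.mem_univ i)
    linarith [sq_nonneg ‖y' ⟨k, by omega⟩ - y α‖, sq_nonneg ‖y' ⟨k + 1, by omega⟩ - y β‖]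
  · linarith [sq_nonneg ‖y' ⟨k + 1, by omega⟩ - y β‖]
  · linarith [sq_nonneg ‖y' ⟨k, by omega⟩ - y α‖]
  all_goals simp [Fin.ext_iff]
  all_goals omega
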